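/- Let m ≥ 1 and let C, D, C', D' ∈ M_m(ℝ) be symmetric matrices. Set J = [[0, −I_m],[I_m, 0]], B = [[C, D],[D, −C]], B' = [[C', D'],[D', −C']] ∈ M_{2m}(ℝ). Then Tr( J·(−B B'ᵀ + B' Bᵀ − Bᵀ B' + B'ᵀ B) ) = 8·Tr(D C' − C D'). In particular, taking B' = −J·B (i.e. C' = D, D' = −C), the value equals 8·Tr(C² + D²) = 4·‖B‖²_F, which is strictly positive whenever B ≠ 0. -/
import Mathlib


noncomputable section

open Matrix

theorem my_trace_fromBlocks {m : ℕ} (A B C D : Matrix (Fin m) (Fin m) ℝ) :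
    Matrix.trace (Matrix.fromBlocks A B C D) = Matrix.trace A + Matrix.trace D := by
  simp [Matrix.trace, Fintype.sum_sum_type, Matrix.diag, Matrix.fromBlocks]

theorem my_fromBlocks_sub {m : ℕ} (A B C D A' B' C' D' : Matrix (Fin m) (Fin m) ℝ) :
    Matrix.fromBlocks A B C D - Matrix.fromBlocks A' B' C' D' =
      Matrix.fromBlocks (A - A') (B - B') (C - C') (D - D') := by
  rw [sub_eq_add_neg, Matrix.fromBlocks_neg, Matrix.fromBlocks_add]
  simp [sub_eq_add_neg]

theorem main_part (m : ℕ) (C D C' D' : Matrix (Fin m) (Fin m) ℝ)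
    (hC : Cᵀ = C) (hD : Dᵀ = D) (hC' : C'ᵀ = C') (hD' : D'ᵀ = D') :
    Matrix.trace ((Matrix.fromBlocks 0 (-1) 1 0 : Matrix (Fin m ⊕ Fin m) (Fin m ⊕ Fin m) ℝ) *
      (-(Matrix.fromBlocks C D D (-C) * (Matrix.fromBlocks C' D' D' (-C'))ᵀ)
       + Matrix.fromBlocks C' D' D' (-C') * (Matrix.fromBlocks C D D (-C))ᵀ
       - (Matrix.fromBlocks C D D (-C))ᵀ * Matrix.fromBlocks C' D' D' (-C')
       + (Matrix.fromBlocks C' D' D' (-C'))ᵀ * Matrix.fromBlocks C D D (-C))) =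
      8 * Matrix.trace (D * C' - C * D') := by
  simp only [Matrix.fromBlocks_transpose, hC, hD, hC', hD', Matrix.transpose_neg,
    Matrix.fromBlocks_neg, Matrix.fromBlocks_multiply, Matrix.fromBlocks_add, my_fromBlocks_sub]
  simp [Matrix.fromBlocks_multiply, my_trace_fromBlocks, Matrix.trace_add, Matrix.trace_sub,
    Matrix.trace_neg, Matrix.trace_mul_comm C' D, Matrix.trace_mul_comm C D', mul_sub]
  ring

theorem my_trace_sq_symm {m : ℕ} (X : Matrix (Fin m) (Fin m) ℝ) (hX : Xᵀ = X) :
    Matrix.trace (X * X) = ∑ i, ∑ j, X i j ^ 2 := by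
  have hsym : ∀ i j, X j i = X i j := fun i j => by conv_lhs => rw [← hX, Matrix.transpose_apply]
  simp [Matrix.trace, Matrix.mul_apply, Matrix.diag, hsym, sq]

/-- The invariant form `λ''` on the bracket of two elements of the `S²V̄_ℂ*`-summand:
for `J = [[0,−I],[I,0]]`, `B = [[C,D],[D,−C]]`, `B' = [[C',D'],[D',−C']]` with
`C, D, C', D'` symmetric, `Tr(J(−BB'ᵀ + B'Bᵀ − BᵀB' + B'ᵀB)) = 8 Tr(DC' − CD')`;
for `B' = −J·B` the value is `8 Tr(C² + D²) = 4‖B‖²_F > 0` whenever `B ≠ 0`. -/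
theorem lambda_double_prime_positive_definite (m : ℕ) (hm : 1 ≤ m)
    (C D C' D' : Matrix (Fin m) (Fin m) ℝ)
    (hC : Cᵀ = C) (hD : Dᵀ = D) (hC' : C'ᵀ = C') (hD' : D'ᵀ = D')
    (J : Matrix (Fin m ⊕ Fin m) (Fin m ⊕ Fin m) ℝ)
    (hJ : J = Matrix.fromBlocks 0 (-1) 1 0)
    (B B' : Matrix (Fin m ⊕ Fin m) (Fin m ⊕ Fin m) ℝ)
    (hB : B = Matrix.fromBlocks C D D (-C))
    (hB' : B' = Matrix.fromBlocks C' D' D' (-C')) :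
    Matrix.trace (J * (-(B * B'ᵀ) + B' * Bᵀ - Bᵀ * B' + B'ᵀ * B)) =
      8 * Matrix.trace (D * C' - C * D') ∧
    Matrix.trace (J * (-(B * (-(J * B))ᵀ) + (-(J * B)) * Bᵀ - Bᵀ * (-(J * B)) +
        (-(J * B))ᵀ * B)) =
      8 * Matrix.trace (C * C + D * D) ∧
    8 * Matrix.trace (C * C + D * D) = 4 * ∑ i, ∑ j, B i j ^ 2 ∧
    (B ≠ 0 →
      0 < Matrix.trace (J * (-(B * (-(J * B))ᵀ) + (-(J * B)) * Bᵀ - Bᵀ * (-(J * B)) +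
        (-(J * B))ᵀ * B))) := by
  have hJB : -(J * B) = Matrix.fromBlocks D (-C) (-C) (-D) := by
    rw [hJ, hB, Matrix.fromBlocks_multiply]
    simp [Matrix.fromBlocks_neg]
  have h2 : Matrix.trace (J * (-(B * (-(J * B))ᵀ) + (-(J * B)) * Bᵀ - Bᵀ * (-(J * B)) +
        (-(J * B))ᵀ * B)) = 8 * Matrix.trace (C * C + D * D) := by
    rw [hJB, hJ, hB, main_part m C D D (-C) hC hD hD (by simp [hC])]
    rw [mul_neg, sub_neg_eq_add, Matrix.trace_add, Matrix.trace_add, add_comm]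
  have h3 : 8 * Matrix.trace (C * C + D * D) = 4 * ∑ i, ∑ j, B i j ^ 2 := by
    rw [Matrix.trace_add, my_trace_sq_symm C hC, my_trace_sq_symm D hD, hB]
    simp [Fintype.sum_sum_type, Matrix.fromBlocks, Finset.sum_add_distrib]
    ring
  refine ⟨?_, h2, h3, ?_⟩
  · rw [hJ, hB, hB']; exact main_part m C D C' D' hC hD hC' hD'
  · intro hBne
    rw [h2, h3]
    have hex : ∃ i j, B i j ≠ 0 := by
      by_contra h
      push_neg at h
      exact hBne (Matrix.ext fun i j => h i j)
    obtain ⟨i, j, hij⟩ := hex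
    have hpos : 0 < ∑ i, ∑ j, B i j ^ 2 := by
      refine Finset.sum_pos' (fun k _ => Finset.sum_nonneg fun l _ => sq_nonneg _)
        ⟨i, Finset.mem_univ i, ?_⟩
      refine Finset.sum_pos' (fun l _ => sq_nonneg _)
        ⟨j, Finset.mem_univ j, by positivity⟩
    linarith
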